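/- Atomic prefixing is commutative up to weak atomic equivalence: α.β.M ≈ β.α.M for all actions α, β and atomic expressions M. -/

import Mathlib

/-- Actions: reads and writes of names. -/
inductive Act (N : Type*) where
  | rd (a : N)
  | wt (a : N)

/-- Multiset of names written in a log. -/
def Wl {N : Type*} : List (Act N) → Multiset N
  | [] => 0
  | .wt a :: δ => Wl δ + {a}
  | .rd _ :: δ => Wl δ

/-- Multiset of names read in a log. -/
def Rl {N : Type*} : List (Act N) → Multiset N
  | [] => 0
  | .rd a :: δ => Rl δ + {a}
  | .wt _ :: δ => Rl δ

/-- Atomic expressions. -/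
inductive Expr (N : Type*) where
  | done
  | retry
  | rd (a : N) (M : Expr N)
  | wt (a : N) (M : Expr N)
  | orElse (M₁ M₂ : Expr N)

/-- Ongoing atomic expressions. -/
inductive Ong (N : Type*) where
  | block (M : Expr N) (σ : Multiset N) (δ : List (Act N))
  | orElse (A B : Ong N)

/-- One-step reduction of ongoing expressions. -/
inductive Step {N : Type*} : Ong N → Ong N → Prop where
  | rdOk {a : N} {M σ δ} (h : Rl δ + {a} ≤ σ) :
      Step (.block (.rd a M) σ δ) (.block M σ (δ ++ [.rd a]))
  | rdFail {a : N} {M σ δ} (h : ¬ Rl δ + {a} ≤ σ) :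
      Step (.block (.rd a M) σ δ) (.block .retry σ δ)
  | wr {a : N} {M σ δ} :
      Step (.block (.wt a M) σ δ) (.block M σ (δ ++ [.wt a]))
  | orE {M₁ M₂ : Expr N} {σ δ} :
      Step (.block (.orElse M₁ M₂) σ δ) (.orElse (.block M₁ σ δ) (.block M₂ σ δ))
  | orFail {σ : Multiset N} {δ B} : Step (.orElse (.block .retry σ δ) B) B
  | orEnd {σ : Multiset N} {δ B} : Step (.orElse (.block .done σ δ) B) (.block .done σ δ)
  | congL {A A' B : Ong N} (h : Step A A') : Step (.orElse A B) (.orElse A' B)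
  | congR {A B B' : Ong N} (h : Step B B') : Step (.orElse A B) (.orElse A B')

/-- Multi-step reduction. -/
def Steps {N : Type*} : Ong N → Ong N → Prop := Relation.ReflTransGen Step

/-- Logs with the same effect on state σ. -/
def EffEq {N : Type*} [DecidableEq N] (σ : Multiset N) (δ δ' : List (Act N)) : Prop :=
  σ - Rl δ + Wl δ = σ - Rl δ' + Wl δ'

/-- Weak atomic equivalence. -/
def AEq {N : Type*} [DecidableEq N] (M M' : Expr N) : Prop :=
  ∀ σ : Multiset N,
    ((∃ δ, Steps (.block M σ []) (.block .retry σ δ)) ∧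
     (∃ δ', Steps (.block M' σ []) (.block .retry σ δ'))) ∨
    (∃ δ δ', Steps (.block M σ []) (.block .done σ δ) ∧
             Steps (.block M' σ []) (.block .done σ δ') ∧ EffEq σ δ δ')

/-- Prefixing an action onto an expression. -/
def pre {N : Type*} : Act N → Expr N → Expr N
  | .rd a, M => .rd a M
  | .wt a, M => .wt a M

/-- The pure sequence expression α₁.….αₙ.end. -/
def seq {N : Type*} (K : List (Act N)) : Expr N := K.foldr pre .done

/-- Right-nested orElse of a nonempty list of expressions. -/
def ors {N : Type*} : Expr N → List (Expr N) → Expr N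
  | M, [] => M
  | M, M' :: rest => .orElse M (ors M' rest)

/-!
Reduction of an atomic block is deterministic up to the order of independent steps, so its
outcome is computed by an evaluator returning the final log, or nothing for a retry. Both the
evaluation and the effect `(σ \ R(δ)) ⊎ W(δ)` of the final log see a log only through its read
and write multisets. Performing α then β adds the same multisets as β then α, under the same
enabling condition: a read `rd(a)` is enabled iff the reads so far together with `a` fit into σ,
and reads only accumulate.
-/

section

variable {N : Type*}

@[simp]
lemma Rl_append (δ γ : List (Act N)) : Rl (δ ++ γ) = Rl δ + Rl γ := by
  induction δ with
  | nil => simp [Rl]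
  | cons x δ ih => cases x <;> simp [Rl, ih, add_right_comm]

@[simp]
lemma Wl_append (δ γ : List (Act N)) : Wl (δ ++ γ) = Wl δ + Wl γ := by
  induction δ with
  | nil => simp [Wl]
  | cons x δ ih => cases x <;> simp [Wl, ih, add_right_comm]

def logEffect (δ : List (Act N)) : Multiset N × Multiset N := (Rl δ, Wl δ)

lemma logEffect_append (δ γ : List (Act N)) :
    logEffect (δ ++ γ) = logEffect δ + logEffect γ := by
  simp [logEffect]

lemma EffEq.of_logEffect_eq [DecidableEq N] {σ : Multiset N} {δ δ' : List (Act N)}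
    (h : logEffect δ = logEffect δ') : EffEq σ δ δ' := by
  obtain ⟨hR, hW⟩ := Prod.ext_iff.mp h
  exact congrArg₂ (σ - · + ·) hR hW

lemma Option.map_bind_congr {α β γ δ : Type*} {f : α → β} {g : α → Option γ} {f' : γ → δ}
    {o o' : Option α} (hg : ∀ a a', f a = f a' → (g a).map f' = (g a').map f')
    (h : o.map f = o'.map f) : (o.bind g).map f' = (o'.bind g).map f' := by
  cases o <;> cases o'
  · rfl
  · cases h
  · cases h
  · exact hg _ _ (Option.some_injective _ h)

def Ong.Reaches (σ : Multiset N) (A : Ong N) : Option (List (Act N)) → Prop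
  | some γ => Steps A (.block .done σ γ)
  | none => ∃ γ, Steps A (.block .retry σ γ)

lemma Ong.Reaches.of_steps {σ : Multiset N} {A B : Ong N} {o : Option (List (Act N))}
    (h : Steps A B) (hB : B.Reaches σ o) : A.Reaches σ o := by
  cases o with
  | some γ => exact h.trans hB
  | none => obtain ⟨γ, hγ⟩ := hB; exact ⟨γ, h.trans hγ⟩

lemma steps_orElse_left {A A' : Ong N} (B : Ong N) (h : Steps A A') :
    Steps (.orElse A B) (.orElse A' B) :=
  Relation.ReflTransGen.lift (Ong.orElse · B) (fun _ _ => Step.congL) _ _ h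

section Evaluation

variable [DecidableEq N] (σ : Multiset N)

def Act.perform : Act N → List (Act N) → Option (List (Act N))
  | .rd a, δ => if Rl δ + {a} ≤ σ then some (δ ++ [.rd a]) else none
  | .wt a, δ => some (δ ++ [.wt a])

def Expr.eval : Expr N → List (Act N) → Option (List (Act N))
  | .done, δ => some δ
  | .retry, _ => none
  | .rd a M, δ => ((Act.rd a).perform σ δ).bind (eval M)
  | .wt a M, δ => ((Act.wt a).perform σ δ).bind (eval M)
  | .orElse M₁ M₂, δ => (eval M₁ δ).orElse fun _ => eval M₂ δ

lemma Expr.eval_pre (α : Act N) (M : Expr N) (δ : List (Act N)) :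
    (pre α M).eval σ δ = (α.perform σ δ).bind (M.eval σ) := by
  cases α <;> rfl

variable {σ}

lemma Ong.reaches_pre {α : Act N} {M : Expr N} {δ : List (Act N)}
    (ih : ∀ δ', (Ong.block M σ δ').Reaches σ (M.eval σ δ')) :
    (Ong.block (pre α M) σ δ).Reaches σ ((pre α M).eval σ δ) := by
  rw [Expr.eval_pre]
  cases α with
  | rd a =>
    by_cases h : Rl δ + {a} ≤ σ
    · rw [Act.perform, if_pos h]
      exact (ih _).of_steps (.single (Step.rdOk h))
    · rw [Act.perform, if_neg h]
      exact ⟨δ, .single (Step.rdFail h)⟩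
  | wt a => exact (ih _).of_steps (.single Step.wr)

lemma Ong.reaches_eval (M : Expr N) (δ : List (Act N)) :
    (Ong.block M σ δ).Reaches σ (M.eval σ δ) := by
  induction M generalizing δ with
  | done => exact .refl
  | retry => exact ⟨δ, .refl⟩
  | rd a M ih => exact reaches_pre (α := .rd a) ih
  | wt a M ih => exact reaches_pre (α := .wt a) ih
  | orElse M₁ M₂ ih₁ ih₂ =>
    refine .of_steps (.single .orE) ?_
    have h₁ := ih₁ δ
    rw [Expr.eval]
    cases h : M₁.eval σ δ with
    | some γ =>
      rw [h] at h₁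
      exact (steps_orElse_left _ h₁).tail .orEnd
    | none =>
      rw [h] at h₁
      obtain ⟨γ, h₁⟩ := h₁
      exact (ih₂ δ).of_steps ((steps_orElse_left _ h₁).tail .orFail)

lemma Act.map_logEffect_perform_congr (α : Act N) {δ δ' : List (Act N)}
    (h : logEffect δ = logEffect δ') :
    (α.perform σ δ).map logEffect = (α.perform σ δ').map logEffect := by
  have hR : Rl δ = Rl δ' := congrArg Prod.fst h
  cases α <;> simp [perform, hR, apply_ite, logEffect_append, h]

lemma Expr.map_logEffect_eval_congr (M : Expr N) {δ δ' : List (Act N)}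
    (h : logEffect δ = logEffect δ') :
    (M.eval σ δ).map logEffect = (M.eval σ δ').map logEffect := by
  induction M generalizing δ δ' with
  | done => simpa [eval]
  | retry => rfl
  | rd a M ih | wt a M ih =>
    exact Option.map_bind_congr (fun _ _ => ih) (Act.map_logEffect_perform_congr _ h)
  | orElse M₁ M₂ ih₁ ih₂ =>
    have h₁ := ih₁ h
    have h₂ := ih₂ h
    simp only [eval]
    cases h₁' : M₁.eval σ δ <;> cases h₁'' : M₁.eval σ δ' <;> simp_all

lemma Act.perform_rd_bind_perform_rd (a b : N) (δ : List (Act N)) :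
    ((rd a).perform σ δ).bind ((rd b).perform σ) =
      if Rl δ + {a} + {b} ≤ σ then some (δ ++ [rd a, rd b]) else none := by
  by_cases hab : Rl δ + {a} + {b} ≤ σ
  · simp [perform, hab, le_of_add_le_left hab, Rl]
  · by_cases ha : Rl δ + {a} ≤ σ <;> simp [perform, ha, hab, Rl]

lemma Act.map_logEffect_perform_comm (α β : Act N) (δ : List (Act N)) :
    ((α.perform σ δ).bind (β.perform σ)).map logEffect =
      ((β.perform σ δ).bind (α.perform σ)).map logEffect := by
  cases α with
  | rd a =>
    cases β with
    | rd b =>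
      simp only [Act.perform_rd_bind_perform_rd, add_right_comm _ {a}]
      split_ifs <;> simp [logEffect, Rl, Wl, add_comm]
    | wt b => by_cases ha : Rl δ + {a} ≤ σ <;> simp [Act.perform, ha, logEffect, Rl, Wl]
  | wt a =>
    cases β with
    | rd b => by_cases hb : Rl δ + {b} ≤ σ <;> simp [Act.perform, hb, logEffect, Rl, Wl]
    | wt b => simp [Act.perform, logEffect, Rl, Wl, add_comm]

lemma Expr.map_logEffect_eval_pre_comm (α β : Act N) (M : Expr N) (δ : List (Act N)) :
    ((pre α (pre β M)).eval σ δ).map logEffect = ((pre β (pre α M)).eval σ δ).map logEffect := by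
  simp only [eval_pre, ← Option.bind_assoc]
  exact Option.map_bind_congr (fun _ _ => M.map_logEffect_eval_congr)
    (α.map_logEffect_perform_comm β δ)

end Evaluation

lemma AEq.of_map_logEffect_eval [DecidableEq N] {M M' : Expr N}
    (h : ∀ σ, (M.eval σ []).map logEffect = (M'.eval σ []).map logEffect) : AEq M M' := by
  intro σ
  have hM := Ong.reaches_eval (σ := σ) M []
  have hM' := Ong.reaches_eval (σ := σ) M' []
  have hσ := h σ
  cases hγ : M.eval σ [] <;> cases hγ' : M'.eval σ [] <;> simp only [hγ, hγ'] at hM hM' hσ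
  · exact .inl ⟨hM, hM'⟩
  · cases hσ
  · cases hσ
  · exact .inr ⟨_, _, hM, hM', .of_logEffect_eq (Option.some_injective _ hσ)⟩

end

/-- Atomic prefixing is commutative up to weak atomic equivalence: α.β.M ≈ β.α.M. -/
theorem stmt8 {N : Type*} [DecidableEq N] (α β : Act N) (M : Expr N) :
    AEq (pre α (pre β M)) (pre β (pre α M)) :=
  .of_map_logEffect_eval fun _ => M.map_logEffect_eval_pre_comm α β []
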